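/- Let d ≥ 1, p > 1, and let p' = p/(p−1). Fix a cutoff η ∈ C^∞(ℝ) with 1_{(−∞,1/2]} ≤ η ≤ 1_{(−∞,1]}, and for R > 0 set ψ_R(t,x) := η((|x|² + t)/R²)^{2p'} for (t,x) ∈ ℝ × ℝ^d. Then there exists a constant C > 0 (depending only on d, p and η) such that for all R > 0, all t ≥ 0 and all x ∈ ℝ^d, the spatial Laplacian satisfies |Δ_x ψ_R(t,x)| ≤ C R^{−2} [ψ_R(t,x)]^{1 − 1/p'}. -/

import Mathlib

/-- The cut-off function `ψ_R(t,x) = η((|x|² + t)/R²)^{2p'}`. -/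
noncomputable def psiR (d : ℕ) (p' : ℝ) (η : ℝ → ℝ) (R t : ℝ)
    (x : EuclideanSpace ℝ (Fin d)) : ℝ :=
  (η ((‖x‖ ^ 2 + t) / R ^ 2)) ^ (2 * p')

/-- The Laplacian of a function on `ℝ^d`, as the sum of the second partial
derivatives along the coordinate directions. -/
noncomputable def lap {d : ℕ} {V : Type*} [NormedAddCommGroup V] [NormedSpace ℝ V]
    (f : EuclideanSpace ℝ (Fin d) → V) (x : EuclideanSpace ℝ (Fin d)) : V :=
  ∑ i : Fin d, fderiv ℝ (fun y => fderiv ℝ f y (EuclideanSpace.single i 1)) x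
    (EuclideanSpace.single i 1)

set_option maxHeartbeats 1000000 in
/-- Let `d ≥ 1`, `p > 1`, `p' = p/(p−1)`, and let `η` be a smooth cutoff
with `1_{(−∞,1/2]} ≤ η ≤ 1_{(−∞,1]}`. Then there is `C > 0` such that for all `R > 0`,
`t ≥ 0`, `x ∈ ℝ^d`, `|Δ_x ψ_R(t,x)| ≤ C R^{−2} ψ_R(t,x)^{1 − 1/p'}`. -/
theorem laplacian_cutoff_bound (d : ℕ) (hd : 1 ≤ d) (p : ℝ) (hp : 1 < p)
    (η : ℝ → ℝ) (hη_smooth : ContDiff ℝ (⊤ : ℕ∞) η)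
    (hη_lower : ∀ s : ℝ, Set.indicator (Set.Iic (1/2 : ℝ)) 1 s ≤ η s)
    (hη_upper : ∀ s : ℝ, η s ≤ Set.indicator (Set.Iic (1 : ℝ)) 1 s) :
    ∃ C > 0, ∀ R > 0, ∀ t : ℝ, 0 ≤ t → ∀ x : EuclideanSpace ℝ (Fin d),
      |lap (psiR d (p / (p - 1)) η R t) x| ≤
        C * R ^ (-2 : ℝ) * (psiR d (p / (p - 1)) η R t x) ^ (1 - 1 / (p / (p - 1))) := by
  have hp1 : (0:ℝ) < p - 1 := by linarith
  set p' : ℝ := p / (p - 1) with hp'def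
  have hp'1 : 1 < p' := by
    rw [hp'def, lt_div_iff₀ hp1]; linarith
  set c : ℝ := 2 * p' with hcdef
  have hc : 2 < c := by rw [hcdef]; linarith
  -- basic facts about η
  have hη0 : ∀ s, 0 ≤ η s := fun s =>
    le_trans (Set.indicator_nonneg (fun _ _ => zero_le_one) s) (hη_lower s)
  have hη1 : ∀ s, η s ≤ 1 := fun s => (hη_upper s).trans (by
    by_cases h : s ∈ Set.Iic (1:ℝ) <;> simp [Set.indicator, h])
  have hηeq1 : ∀ s : ℝ, s ≤ 1/2 → η s = 1 := by
    intro s hs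
    refine le_antisymm (hη1 s) ?_
    have := hη_lower s
    rwa [Set.indicator_of_mem (by exact hs) (1 : ℝ → ℝ)] at this
  have hηeq0 : ∀ s : ℝ, 1 < s → η s = 0 := by
    intro s hs
    refine le_antisymm ?_ (hη0 s)
    have := hη_upper s
    rwa [Set.indicator_of_notMem (by simpa using hs) (1 : ℝ → ℝ)] at this
  -- smoothness
  have hsm : ContDiff ℝ (⊤ : ℕ∞) η := hη_smooth.of_le (by simp)
  rw [show ((⊤:ℕ∞) : WithTop ℕ∞) = (⊤:ℕ∞) from rfl] at hsm
  have h1 := contDiff_infty_iff_deriv.mp hsm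
  have hd1 : Differentiable ℝ η := h1.1
  have hsm' : ContDiff ℝ (⊤ : ℕ∞) (deriv η) := h1.2
  have h2 := contDiff_infty_iff_deriv.mp hsm'
  have hd2 : Differentiable ℝ (deriv η) := h2.1
  have hsm'' : ContDiff ℝ (⊤ : ℕ∞) (deriv (deriv η)) := h2.2
  -- vanishing of derivatives outside [1/2, 1]
  have hη'0 : ∀ s : ℝ, s < 1/2 ∨ 1 < s → deriv η s = 0 := by
    intro s hs
    rcases hs with hs | hs
    · have hev : η =ᶠ[nhds s] fun _ => (1:ℝ) := by
        filter_upwards [Iio_mem_nhds hs] with y hy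
        exact hηeq1 y (le_of_lt hy)
      rw [hev.deriv_eq, deriv_const]
    · have hev : η =ᶠ[nhds s] fun _ => (0:ℝ) := by
        filter_upwards [Ioi_mem_nhds hs] with y hy
        exact hηeq0 y hy
      rw [hev.deriv_eq, deriv_const]
  have hη''0 : ∀ s : ℝ, s < 1/2 ∨ 1 < s → deriv (deriv η) s = 0 := by
    intro s hs
    rcases hs with hs | hs
    · have hev : deriv η =ᶠ[nhds s] fun _ => (0:ℝ) := by
        filter_upwards [Iio_mem_nhds hs] with y hy
        exact hη'0 y (Or.inl hy)
      rw [hev.deriv_eq, deriv_const]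
    · have hev : deriv η =ᶠ[nhds s] fun _ => (0:ℝ) := by
        filter_upwards [Ioi_mem_nhds hs] with y hy
        exact hη'0 y (Or.inr hy)
      rw [hev.deriv_eq, deriv_const]
  -- a uniform bound on the derivatives
  obtain ⟨M0, hM0⟩ := (isCompact_Icc (a := (1/2:ℝ)) (b := 1)).exists_bound_of_continuousOn
    (f := fun s => |deriv η s| + |deriv (deriv η) s|)
    ((hsm'.continuous.abs.add hsm''.continuous.abs).continuousOn)
  set M : ℝ := max M0 1 with hMdef
  have hM1 : (1:ℝ) ≤ M := le_max_right _ _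
  have hMpos : (0:ℝ) < M := lt_of_lt_of_le one_pos hM1
  have hb1 : ∀ s, |deriv η s| ≤ M := by
    intro s
    by_cases hs : s ∈ Set.Icc (1/2 : ℝ) 1
    · calc |deriv η s| ≤ |deriv η s| + |deriv (deriv η) s| :=
            le_add_of_nonneg_right (abs_nonneg _)
        _ ≤ M0 := by
            have h := hM0 s hs
            rwa [Real.norm_eq_abs, abs_of_nonneg (by positivity)] at h
        _ ≤ M := le_max_left _ _
    · have h0 : deriv η s = 0 := by
        apply hη'0
        simp only [Set.mem_Icc, not_and_or, not_le] at hs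
        tauto
      rw [h0]; simpa using hMpos.le
  have hb2 : ∀ s, |deriv (deriv η) s| ≤ M := by
    intro s
    by_cases hs : s ∈ Set.Icc (1/2 : ℝ) 1
    · calc |deriv (deriv η) s| ≤ |deriv η s| + |deriv (deriv η) s| :=
            le_add_of_nonneg_left (abs_nonneg _)
        _ ≤ M0 := by
            have h := hM0 s hs
            rwa [Real.norm_eq_abs, abs_of_nonneg (by positivity)] at h
        _ ≤ M := le_max_left _ _
    · have h0 : deriv (deriv η) s = 0 := by
        apply hη''0
        simp only [Set.mem_Icc, not_and_or, not_le] at hs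
        tauto
      rw [h0]; simpa using hMpos.le
  -- the one-dimensional profile and its derivatives
  set g1 : ℝ → ℝ := fun s => c * η s ^ (c-1) * deriv η s with hg1def
  set g2 : ℝ → ℝ := fun s =>
    c * ((c-1) * η s ^ (c-2) * (deriv η s * deriv η s) + η s ^ (c-1) * deriv (deriv η) s)
    with hg2def
  have hg : ∀ s, HasDerivAt (fun s => η s ^ c) (g1 s) s := by
    intro s
    have h := (Real.hasDerivAt_rpow_const (x := η s) (p := c)
      (Or.inr (by linarith))).comp s (hd1 s).hasDerivAt
    simpa [Function.comp_def, hg1def] using h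
  have hg1' : ∀ s, HasDerivAt g1 (g2 s) s := by
    intro s
    have ha : HasDerivAt (fun s => η s ^ (c-1)) ((c-1) * η s ^ (c-1-1) * deriv η s) s := by
      have h := (Real.hasDerivAt_rpow_const (x := η s) (p := c-1)
        (Or.inr (by linarith))).comp s (hd1 s).hasDerivAt
      simpa [Function.comp_def] using h
    have hb : HasDerivAt (deriv η) (deriv (deriv η) s) s := (hd2 s).hasDerivAt
    have h : HasDerivAt (fun y => c * (η y ^ (c-1) * deriv η y)) (c * ((c - 1) * η s ^ (c - 1 - 1) * deriv η s * deriv η s + η s ^ (c - 1) * deriv (deriv η) s)) s := (ha.mul hb).const_mul c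
    have hfun : (fun y => c * (η y ^ (c-1) * deriv η y)) = g1 := by
      funext y; simp only [hg1def]; ring
    rw [hfun] at h
    have hder : c * ((c - 1) * η s ^ (c - 1 - 1) * deriv η s * deriv η s
        + η s ^ (c - 1) * deriv (deriv η) s) = g2 s := by
      simp only [hg2def]
      rw [show c - 1 - 1 = c - 2 by ring]
      ring
    rwa [hder] at h
  -- exponent comparison : η^(c-1) ≤ η^(c-2)
  have hpowle : ∀ s, η s ^ (c-1) ≤ η s ^ (c-2) := by
    intro s
    rcases eq_or_lt_of_le (hη0 s) with h | h
    · rw [← h, Real.zero_rpow (by linarith), Real.zero_rpow (by linarith)]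
    · exact Real.rpow_le_rpow_of_exponent_ge h (hη1 s) (by linarith)
  have hpow0 : ∀ s, 0 ≤ η s ^ (c-2) := fun s => Real.rpow_nonneg (hη0 s) _
  have hpow0' : ∀ s, 0 ≤ η s ^ (c-1) := fun s => Real.rpow_nonneg (hη0 s) _
  -- pointwise bounds on g1, g2
  have hbg1 : ∀ s, |g1 s| ≤ c * M * η s ^ (c-2) := by
    intro s
    rw [hg1def]
    calc |c * η s ^ (c-1) * deriv η s| = c * η s ^ (c-1) * |deriv η s| := by
          rw [abs_mul, abs_mul, abs_of_nonneg (by linarith : (0:ℝ) ≤ c),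
            abs_of_nonneg (hpow0' s)]
      _ ≤ c * η s ^ (c-2) * M := by
          apply mul_le_mul
          · exact mul_le_mul_of_nonneg_left (hpowle s) (by linarith)
          · exact hb1 s
          · exact abs_nonneg _
          · exact mul_nonneg (by linarith) (hpow0 s)
      _ = c * M * η s ^ (c-2) := by ring
  have hbg2 : ∀ s, |g2 s| ≤ c * ((c-1) * M^2 + M) * η s ^ (c-2) := by
    intro s
    rw [hg2def]
    have e1 : |(c-1) * η s ^ (c-2) * (deriv η s * deriv η s)| ≤
        (c-1) * M^2 * η s ^ (c-2) := by
      rw [abs_mul, abs_mul, abs_of_nonneg (by linarith : (0:ℝ) ≤ c - 1),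
        abs_of_nonneg (hpow0 s), abs_mul]
      calc (c-1) * η s ^ (c-2) * (|deriv η s| * |deriv η s|)
          ≤ (c-1) * η s ^ (c-2) * (M * M) := by
            apply mul_le_mul_of_nonneg_left _ (mul_nonneg (by linarith) (hpow0 s))
            exact mul_le_mul (hb1 s) (hb1 s) (abs_nonneg _) hMpos.le
        _ = (c-1) * M^2 * η s ^ (c-2) := by ring
    have e2 : |η s ^ (c-1) * deriv (deriv η) s| ≤ M * η s ^ (c-2) := by
      rw [abs_mul, abs_of_nonneg (hpow0' s)]
      calc η s ^ (c-1) * |deriv (deriv η) s| ≤ η s ^ (c-2) * M :=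
            mul_le_mul (hpowle s) (hb2 s) (abs_nonneg _) (hpow0 s)
        _ = M * η s ^ (c-2) := by ring
    calc |c * ((c-1) * η s ^ (c-2) * (deriv η s * deriv η s) + η s ^ (c-1) * deriv (deriv η) s)|
        = c * |(c-1) * η s ^ (c-2) * (deriv η s * deriv η s) + η s ^ (c-1) * deriv (deriv η) s| := by
          rw [abs_mul, abs_of_nonneg (by linarith : (0:ℝ) ≤ c)]
      _ ≤ c * ((c-1) * M^2 * η s ^ (c-2) + M * η s ^ (c-2)) := by
          apply mul_le_mul_of_nonneg_left _ (by linarith)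
          exact (abs_add_le _ _).trans (add_le_add e1 e2)
      _ = c * ((c-1) * M^2 + M) * η s ^ (c-2) := by ring
  -- the constant
  have hd' : (0:ℝ) < (d:ℝ) := by exact_mod_cast hd
  have hCpos : (0:ℝ) < 2 * d * c * M + 4 * c * ((c-1) * M^2 + M) := by
    have t1 : (0:ℝ) < 2 * (d:ℝ) * c * M :=
      mul_pos (mul_pos (mul_pos two_pos hd') (by linarith)) hMpos
    have t2 : (0:ℝ) < 4 * c * ((c-1) * M^2 + M) := by
      refine mul_pos (by linarith) ?_
      have : (0:ℝ) < (c-1) * M^2 := by nlinarith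
      linarith
    linarith
  refine ⟨2 * d * c * M + 4 * c * ((c-1) * M^2 + M), hCpos, ?_⟩
  intro R hR t ht x
  have hR2 : (0:ℝ) < R^2 := by positivity
  -- the scaled radial variable
  set u : EuclideanSpace ℝ (Fin d) → ℝ := fun y => (‖y‖^2 + t) / R^2 with hudef
  have hu : ∀ y, HasFDerivAt u ((R^2)⁻¹ • (2 • (innerSL ℝ y))) y := by
    intro y
    have h1 : HasFDerivAt (fun y : EuclideanSpace ℝ (Fin d) => ‖y‖^2 + t)
        (2 • (innerSL ℝ y)) y := (hasStrictFDerivAt_norm_sq y).hasFDerivAt.add_const t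
    have h2 := h1.const_mul ((R^2)⁻¹)
    have : u = fun y : EuclideanSpace ℝ (Fin d) => (R^2)⁻¹ * (‖y‖^2 + t) := by
      funext z; rw [hudef]; ring
    rw [this]
    convert h2 using 1
  have hUval : ∀ (y : EuclideanSpace ℝ (Fin d)) (i : Fin d),
      ((R^2)⁻¹ • (2 • (innerSL ℝ y))) (EuclideanSpace.single i 1) = 2 * y i / R^2 := by
    intro y i
    simp [EuclideanSpace.inner_single_right]
    ring
  -- the function equals the composition
  have hψcomp : psiR d p' η R t = (fun s => η s ^ c) ∘ u := by
    funext z; simp only [psiR, Function.comp, hudef, hcdef]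
  -- first derivative
  have hψ : ∀ y, HasFDerivAt (psiR d p' η R t)
      (g1 (u y) • ((R^2)⁻¹ • (2 • (innerSL ℝ y)))) y := by
    intro y
    rw [hψcomp]
    exact (hg (u y)).comp_hasFDerivAt y (hu y)
  have hfd : ∀ (y : EuclideanSpace ℝ (Fin d)) (i : Fin d),
      fderiv ℝ (psiR d p' η R t) y (EuclideanSpace.single i 1)
        = g1 (u y) * (2 * y i / R^2) := by
    intro y i
    rw [(hψ y).fderiv]
    rw [ContinuousLinearMap.smul_apply, hUval y i, smul_eq_mul]
  -- second derivative in direction i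
  have hsecond : ∀ i : Fin d,
      fderiv ℝ (fun y => fderiv ℝ (psiR d p' η R t) y (EuclideanSpace.single i 1)) x
        (EuclideanSpace.single i 1)
      = g1 (u x) * (2 / R^2) + g2 (u x) * (2 * x i / R^2) * (2 * x i / R^2) := by
    intro i
    have hfun : (fun y => fderiv ℝ (psiR d p' η R t) y (EuclideanSpace.single i 1))
        = fun y => g1 (u y) * (2 * y i / R^2) := by
      funext y; exact hfd y i
    rw [hfun]
    have ha : HasFDerivAt (fun y => g1 (u y))
        (g2 (u x) • ((R^2)⁻¹ • (2 • (innerSL ℝ x)))) x :=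
      (hg1' (u x)).comp_hasFDerivAt x (hu x)
    have hproj : HasFDerivAt (fun y : EuclideanSpace ℝ (Fin d) => y i)
        (EuclideanSpace.proj (𝕜 := ℝ) i) x := by
      have := (EuclideanSpace.proj (𝕜 := ℝ) (i := i)).hasFDerivAt (x := x)
      simpa using this
    have hb : HasFDerivAt (fun y : EuclideanSpace ℝ (Fin d) => 2 * y i / R^2)
        ((2 / R^2) • (EuclideanSpace.proj (𝕜 := ℝ) i)) x := by
      have h2 := hproj.const_mul (2 / R^2)
      have : (fun y : EuclideanSpace ℝ (Fin d) => 2 * y i / R^2)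
          = fun y : EuclideanSpace ℝ (Fin d) => (2 / R^2) * y i := by
        funext z; ring
      rw [this]; exact h2
    have hmul : HasFDerivAt (fun y => g1 (u y) * (2 * y i / R^2)) _ x := ha.mul hb
    rw [hmul.fderiv]
    have hpe : (EuclideanSpace.proj (𝕜 := ℝ) i) (EuclideanSpace.single i 1) = 1 := by
      simp
    have hInner : (innerSL ℝ x) (EuclideanSpace.single i 1) = x i := by
      simp [EuclideanSpace.inner_single_right]
    simp only [ContinuousLinearMap.add_apply, ContinuousLinearMap.smul_apply, hInner, hpe,
      smul_eq_mul]
    ring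
  -- the Laplacian
  have hnormsq : ‖x‖^2 = ∑ i, x i ^ 2 := by
    rw [EuclideanSpace.norm_eq, Real.sq_sqrt (by positivity)]
    simp
  have hlap : lap (psiR d p' η R t) x
      = g1 (u x) * (2 * d / R^2) + g2 (u x) * (4 * ‖x‖^2 / (R^2 * R^2)) := by
    rw [lap]
    rw [Finset.sum_congr rfl (fun i _ => hsecond i)]
    rw [Finset.sum_add_distrib, Finset.sum_const, Finset.card_univ, Fintype.card_fin]
    rw [hnormsq, Finset.mul_sum]
    rw [nsmul_eq_mul]
    congr 1
    · ring
    · rw [Finset.sum_div, Finset.mul_sum]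
      apply Finset.sum_congr rfl
      intro i _
      ring
  -- the right-hand side power
  have hexp : c * (1 - 1 / p') = c - 2 := by
    have hp'0 : p' ≠ 0 := by positivity
    rw [hcdef]
    field_simp
  have hpsiRpow : (psiR d p' η R t x) ^ (1 - 1 / p') = η (u x) ^ (c - 2) := by
    rw [hψcomp]
    simp only [Function.comp]
    rw [← Real.rpow_mul (hη0 (u x)), hexp]
  have hRneg : R ^ (-2:ℝ) = (R^2)⁻¹ := by
    rw [show ((-2:ℝ)) = ((-2 : ℤ) : ℝ) by norm_num, Real.rpow_intCast,
      zpow_neg, ← Real.rpow_intCast R 2]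
    norm_num
  rw [hlap, hpsiRpow, hRneg]
  by_cases hcase : u x ≤ 1
  · -- inside the support region
    have hx2 : ‖x‖^2 ≤ R^2 := by
      have h := (div_le_one hR2).mp hcase
      linarith
    have ht2 : 4 * ‖x‖^2 / (R^2 * R^2) ≤ 4 / R^2 := by
      rw [div_le_div_iff₀ (by positivity) (by positivity)]
      nlinarith [hx2, hR2]
    have hA : 0 ≤ η (u x) ^ (c - 2) := hpow0 (u x)
    calc |g1 (u x) * (2 * ↑d / R ^ 2) + g2 (u x) * (4 * ‖x‖ ^ 2 / (R ^ 2 * R ^ 2))|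
        ≤ |g1 (u x)| * (2 * ↑d / R ^ 2) + |g2 (u x)| * (4 * ‖x‖ ^ 2 / (R ^ 2 * R ^ 2)) := by
          refine (abs_add_le _ _).trans (add_le_add ?_ ?_)
          · rw [abs_mul, abs_of_nonneg (by positivity : (0:ℝ) ≤ 2 * ↑d / R ^ 2)]
          · rw [abs_mul, abs_of_nonneg (by positivity : (0:ℝ) ≤ 4 * ‖x‖ ^ 2 / (R ^ 2 * R ^ 2))]
      _ ≤ (c * M * η (u x) ^ (c - 2)) * (2 * ↑d / R ^ 2)
            + (c * ((c-1) * M^2 + M) * η (u x) ^ (c - 2)) * (4 / R ^ 2) := by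
          refine add_le_add ?_ ?_
          · exact mul_le_mul_of_nonneg_right (hbg1 (u x)) (by positivity)
          · refine mul_le_mul (hbg2 (u x)) ht2 (by positivity) ?_
            refine mul_nonneg (mul_nonneg (by linarith) ?_) hA
            nlinarith [sq_nonneg M]
      _ = (2 * ↑d * c * M + 4 * c * ((c - 1) * M ^ 2 + M)) * (R ^ 2)⁻¹ * (η (u x) ^ (c - 2)) := by
          field_simp
  · -- outside the support region
    push_neg at hcase
    have h0 : η (u x) = 0 := hηeq0 _ hcase
    have h1' : deriv η (u x) = 0 := hη'0 _ (Or.inr hcase)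
    have h2' : deriv (deriv η) (u x) = 0 := hη''0 _ (Or.inr hcase)
    have hg10 : g1 (u x) = 0 := by rw [hg1def]; simp [h1']
    have hg20 : g2 (u x) = 0 := by rw [hg2def]; simp [h1', h2']
    rw [hg10, hg20, h0, Real.zero_rpow (by linarith : c - 2 ≠ 0)]
    simp
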